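/- Let α: G → Aut(A) be a tracially amenable action of a discrete group G on a unital C*-algebra A with nonempty trace space. Then G is amenable if and only if A admits a G-invariant tracial state. -/

import Mathlib

noncomputable section

variable {G : Type*} [Group G] {A : Type*} [CStarAlgebra A]

/-- A tracial state on a unital C*-algebra. -/
def IsTracialState (τ : A →ₗ[ℂ] ℂ) : Prop :=
  τ 1 = 1 ∧ (∀ a : A, 0 ≤ (τ (star a * a)).re ∧ (τ (star a * a)).im = 0) ∧
    ∀ a b : A, τ (a * b) = τ (b * a)

/-- The inner product `⟨ξ,η⟩ = ∑_g ξ(g)* η(g)` on `C_c(G,A) ⊆ ℓ²(G,A)`. -/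
def ip (ξ η : G →₀ A) : A := ξ.sum fun g a => star a * η g

/-- The uniform 2-seminorm `‖a‖_{2,u} = sup_{τ ∈ T(A)} τ(a*a)^{1/2}` on `A`. -/
def u2 (a : A) : ℝ :=
  ⨆ τ : {τ : A →ₗ[ℂ] ℂ // IsTracialState τ}, Real.sqrt ((τ.1 (star a * a)).re)

/-- The uniform 2-seminorm `‖ξ‖_{2,u} = sup_{τ ∈ T(A)} τ(⟨ξ,ξ⟩)^{1/2}` on `ℓ²(G,A)`. -/
def u2l (ξ : G →₀ A) : ℝ :=
  ⨆ τ : {τ : A →ₗ[ℂ] ℂ // IsTracialState τ}, Real.sqrt ((τ.1 (ip ξ ξ)).re)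

/-- Left multiplication `a·ξ`. -/
def lmul (a : A) (ξ : G →₀ A) : G →₀ A := ξ.mapRange (fun x => a * x) (by simp)

/-- Right multiplication `ξ·a`. -/
def rmul (ξ : G →₀ A) (a : A) : G →₀ A := ξ.mapRange (fun x => x * a) (by simp)

/-- The diagonal action `α̃_g(ξ)(h) = α_g(ξ(g⁻¹h))` on `C_c(G,A)`. -/
def diagAct (α : G →* (A ≃ₐ[ℂ] A)) (g : G) (ξ : G →₀ A) : G →₀ A :=
  (ξ.mapDomain fun h => g * h).mapRange (α g) (map_zero _)

/-- Tracial amenability of an action `α : G → Aut(A)` (Definition 2.2): approximately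
central, approximately invariant, approximately unital vectors in the uniform
2-seminorm, contractive in the Hilbert module norm. -/
def IsTraciallyAmenable (α : G →* (A ≃ₐ[ℂ] A)) : Prop :=
  ∀ (F : Finset A) (K : Finset G) (ε : ℝ), 0 < ε →
    ∃ ξ : G →₀ A, Real.sqrt ‖ip ξ ξ‖ ≤ 1 ∧
      (∀ a ∈ F, u2l (rmul ξ a - lmul a ξ) < ε) ∧
      u2 (ip ξ ξ - 1) < ε ∧
      ∀ g ∈ K, u2l (diagAct α g ξ - ξ) < ε

/-- Amenability of a discrete group: a finitely additive, left-invariant probability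
measure on all subsets. -/
def AmenableGroup (G : Type*) [Group G] : Prop :=
  ∃ μ : Set G → ℝ, (∀ s, 0 ≤ μ s) ∧ μ Set.univ = 1 ∧
    (∀ s t : Set G, Disjoint s t → μ (s ∪ t) = μ s + μ t) ∧
    ∀ (g : G) (s : Set G), μ ((fun k => g * k) '' s) = μ s

/-!
If `G` is amenable, averaging the translates `τ ∘ α_g⁻¹` of a tracial state `τ` against an
invariant mean gives an invariant tracial state. The mean on `ℓ^∞(G)` comes from the invariant
finitely additive measure: integrate functions of finite range and extend positively
(M. Riesz). A positive extension is unique, hence invariant, since every bounded function lies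
within `ε` of a function of finite range.

Conversely, let `τ` be an invariant tracial state and `ξ` the almost invariant vectors given by
tracial amenability. The set functions `s ↦ τ(⟨1_s ξ, 1_s ξ⟩)` are finitely additive, almost
normalized and, by Cauchy–Schwarz in the GNS space of `τ`, almost invariant; an ultrafilter
limit of them is an invariant finitely additive probability measure on `G`.
-/

open MeasureTheory Set Filter Topology
open scoped lp ENNReal

namespace MeasureTheory.AddContent

variable {X : Type*} (m : AddContent ℝ (univ : Set (Set X)))

def simpleIntegral (f : X → ℝ) : ℝ := ∑ᶠ v, v * m (f ⁻¹' {v})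

variable {m}

lemma simpleIntegral_eq_sum {f : X → ℝ} {S : Finset ℝ} (hS : range f ⊆ S) :
    m.simpleIntegral f = ∑ v ∈ S, v * m (f ⁻¹' {v}) := by
  refine finsum_eq_sum_of_support_subset _ fun v hv => hS ?_
  by_contra h
  rw [Function.mem_support, preimage_singleton_eq_empty.mpr h, addContent_empty, mul_zero] at hv
  exact hv rfl

lemma simpleIntegral_comp {Y : Type*} {φ : X → Y} {S : Finset Y} (hS : range φ ⊆ S)
    (k : Y → ℝ) : m.simpleIntegral (k ∘ φ) = ∑ y ∈ S, k y * m (φ ⁻¹' {y}) := by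
  classical
  have hfiber (v : ℝ) : (k ∘ φ) ⁻¹' {v} = ⋃ y ∈ S.filter (k · = v), φ ⁻¹' {y} := by
    ext x
    simp only [mem_preimage, Function.comp_apply, mem_singleton_iff, Finset.mem_filter,
      mem_iUnion, exists_prop]
    exact ⟨fun h => ⟨φ x, ⟨hS ⟨x, rfl⟩, h⟩, rfl⟩, by rintro ⟨y, ⟨-, rfl⟩, rfl⟩; rfl⟩
  have hrange : range (k ∘ φ) ⊆ ↑(S.image k) := by
    rintro _ ⟨x, rfl⟩
    exact Finset.mem_image_of_mem k (hS ⟨x, rfl⟩)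
  rw [simpleIntegral_eq_sum hrange,
    ← Finset.sum_fiberwise_of_maps_to fun y hy => Finset.mem_image_of_mem k hy]
  refine Finset.sum_congr rfl fun v _ => ?_
  rw [hfiber, addContent_biUnion (fun _ _ => mem_univ _) ?_ (mem_univ _), Finset.mul_sum]
  · exact Finset.sum_congr rfl fun y hy => by rw [(Finset.mem_filter.mp hy).2]
  · exact fun y _ y' _ h => (Set.disjoint_singleton.mpr h).preimage φ

lemma simpleIntegral_add {f g : X → ℝ} (hf : (range f).Finite) (hg : (range g).Finite) :
    m.simpleIntegral (f + g) = m.simpleIntegral f + m.simpleIntegral g := by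
  set φ : X → ℝ × ℝ := fun x => (f x, g x)
  have hS : range φ ⊆ ↑(hf.toFinset ×ˢ hg.toFinset) := by
    rintro _ ⟨x, rfl⟩
    simp [φ]
  calc m.simpleIntegral (f + g)
      = ∑ p ∈ hf.toFinset ×ˢ hg.toFinset, (p.1 + p.2) * m (φ ⁻¹' {p}) :=
        simpleIntegral_comp hS fun p => p.1 + p.2
    _ = m.simpleIntegral (Prod.fst ∘ φ) + m.simpleIntegral (Prod.snd ∘ φ) := by
        rw [simpleIntegral_comp hS, simpleIntegral_comp hS, ← Finset.sum_add_distrib]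
        simp only [add_mul]

lemma simpleIntegral_smul (c : ℝ) {f : X → ℝ} (hf : (range f).Finite) :
    m.simpleIntegral (c • f) = c * m.simpleIntegral f := by
  have hS : range f ⊆ hf.toFinset := by simp
  rw [show c • f = (c * ·) ∘ f from rfl, simpleIntegral_comp hS, simpleIntegral_eq_sum hS,
    Finset.mul_sum]
  simp only [mul_assoc]

lemma simpleIntegral_const (c : ℝ) : m.simpleIntegral (fun _ => c) = c * m univ := by
  rw [simpleIntegral_eq_sum (S := {c}) (by simp), Finset.sum_singleton,
    preimage_const_of_mem (mem_singleton c)]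

lemma simpleIntegral_nonneg (hm : ∀ s, 0 ≤ m s) {f : X → ℝ} (hf : 0 ≤ f) :
    0 ≤ m.simpleIntegral f := by
  refine finsum_nonneg fun v => ?_
  by_cases hv : v ∈ range f
  · obtain ⟨x, rfl⟩ := hv
    exact mul_nonneg (hf x) (hm _)
  · rw [preimage_singleton_eq_empty.mpr hv, addContent_empty, mul_zero]

lemma simpleIntegral_comp_of_preimage {φ : X → X} (hφ : ∀ s, m (φ ⁻¹' s) = m s) (f : X → ℝ) :
    m.simpleIntegral (f ∘ φ) = m.simpleIntegral f :=
  finsum_congr fun v => by rw [preimage_comp, hφ]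

end MeasureTheory.AddContent

namespace lp

variable (X : Type*) {Y : Type*}

def finiteRangeSubmodule : Submodule ℝ ℓ^∞(X, ℝ) where
  carrier := {f | (range ⇑f).Finite}
  add_mem' {f g} hf hg := (hf.image2 (· + ·) hg).subset <| by
    rintro _ ⟨x, rfl⟩
    exact mem_image2_of_mem (mem_range_self x) (mem_range_self x)
  zero_mem' := (finite_singleton 0).subset range_const_subset
  smul_mem' c f hf := (hf.image (c • ·)).subset <| by
    rintro _ ⟨x, rfl⟩
    exact mem_image_of_mem _ (mem_range_self x)

def nonnegCone : PointedCone ℝ ℓ^∞(X, ℝ) where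
  carrier := {f | 0 ≤ ⇑f}
  add_mem' {f g} hf hg := by
    change 0 ≤ ⇑(f + g)
    rw [lp.coeFn_add]
    exact add_nonneg hf hg
  zero_mem' _ := le_rfl
  smul_mem' c f hf x := mul_nonneg c.2 (hf x)

variable {X}

lemma mem_nonnegCone {f : ℓ^∞(X, ℝ)} : f ∈ nonnegCone X ↔ ∀ x, 0 ≤ f x := Iff.rfl

lemma abs_apply_le_norm (f : ℓ^∞(X, ℝ)) (x : X) : |f x| ≤ ‖f‖ :=
  Real.norm_eq_abs (f x) ▸ lp.norm_apply_le_norm ENNReal.top_ne_zero f x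

lemma one_mem_finiteRangeSubmodule : (1 : ℓ^∞(X, ℝ)) ∈ finiteRangeSubmodule X := by
  change (range ⇑(1 : ℓ^∞(X, ℝ))).Finite
  rw [lp.infty_coeFn_one]
  exact (finite_singleton 1).subset range_const_subset

def compInfty (φ : X → Y) : ℓ^∞(Y, ℝ) →ₗ[ℝ] ℓ^∞(X, ℝ) where
  toFun f := ⟨⇑f ∘ φ, memℓp_infty <|
    (memℓp_infty_iff.mp f.2).mono (range_comp_subset_range φ fun y => ‖f y‖)⟩
  map_add' _ _ := rfl
  map_smul' _ _ := rfl

@[simp]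
lemma compInfty_apply (φ : X → Y) (f : ℓ^∞(Y, ℝ)) (x : X) : compInfty φ f x = f (φ x) := rfl

lemma compInfty_mem_finiteRangeSubmodule (φ : X → Y) {f : ℓ^∞(Y, ℝ)}
    (hf : f ∈ finiteRangeSubmodule Y) : compInfty φ f ∈ finiteRangeSubmodule X :=
  Set.Finite.subset hf (range_comp_subset_range φ ⇑f)

lemma compInfty_mem_nonnegCone (φ : X → Y) {f : ℓ^∞(Y, ℝ)} (hf : f ∈ nonnegCone Y) :
    compInfty φ f ∈ nonnegCone X :=
  fun x => mem_nonnegCone.mp hf (φ x)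

/-- Round `f` down to the grid `εℤ`. -/
lemma exists_sub_mem_finiteRangeSubmodule (f : ℓ^∞(X, ℝ)) {ε : ℝ} (hε : 0 < ε) :
    ∃ r ∈ nonnegCone X, ε • 1 - r ∈ nonnegCone X ∧ f - r ∈ finiteRangeSubmodule X := by
  have hr : Memℓp (fun x => ε * Int.fract (f x / ε)) ∞ := by
    refine memℓp_infty ⟨ε, ?_⟩
    rintro _ ⟨x, rfl⟩
    simp only [Real.norm_eq_abs, abs_of_nonneg (mul_nonneg hε.le (Int.fract_nonneg _))]
    exact mul_le_of_le_one_right hε.le (Int.fract_lt_one _).le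
  refine ⟨⟨_, hr⟩, mem_nonnegCone.mpr fun x => ?_, mem_nonnegCone.mpr fun x => ?_, ?_⟩
  · exact mul_nonneg hε.le (Int.fract_nonneg _)
  · change 0 ≤ ε * (1 : ℓ^∞(X, ℝ)) x - ε * Int.fract (f x / ε)
    rw [lp.infty_coeFn_one, Pi.one_apply, mul_one, sub_nonneg]
    exact mul_le_of_le_one_right hε.le (Int.fract_lt_one _).le
  · have hbound (x : X) : ⌊f x / ε⌋ ∈ Icc ⌊-‖f‖ / ε⌋ ⌊‖f‖ / ε⌋ := by
      have := abs_le.mp (abs_apply_le_norm f x)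
      exact ⟨Int.floor_mono (by gcongr; exact this.1), Int.floor_mono (by gcongr; exact this.2)⟩
    refine ((finite_Icc ⌊-‖f‖ / ε⌋ ⌊‖f‖ / ε⌋).image fun n : ℤ => ε * n).subset ?_
    rintro _ ⟨x, rfl⟩
    refine ⟨_, hbound x, ?_⟩
    change ε * ⌊f x / ε⌋ = f x - ε * Int.fract (f x / ε)
    rw [← Int.self_sub_fract, mul_sub, mul_div_cancel₀ _ hε.ne']

lemma eq_of_nonneg_of_eqOn_finiteRange {M M' : ℓ^∞(X, ℝ) →ₗ[ℝ] ℝ}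
    (hM : ∀ f ∈ nonnegCone X, 0 ≤ M f) (hM' : ∀ f ∈ nonnegCone X, 0 ≤ M' f)
    (h : ∀ f ∈ finiteRangeSubmodule X, M f = M' f) : M = M' := by
  ext f
  have hM1 : 0 ≤ M 1 := hM 1 <| mem_nonnegCone.mpr fun x => by simp [lp.infty_coeFn_one]
  refine eq_of_forall_dist_le fun ε hε => ?_
  obtain ⟨r, hr, hεr, hfr⟩ := exists_sub_mem_finiteRangeSubmodule f (ε := ε / (M 1 + 1))
    (by positivity)
  have hbound (N : ℓ^∞(X, ℝ) →ₗ[ℝ] ℝ) (hN : ∀ f ∈ nonnegCone X, 0 ≤ N f) :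
      0 ≤ N r ∧ N r ≤ ε / (M 1 + 1) * N 1 := by
    have := hN _ hεr
    rw [map_sub, map_smul, smul_eq_mul, sub_nonneg] at this
    exact ⟨hN r hr, this⟩
  have hdiff : M f - M' f = M r - M' r := by
    have := h _ hfr
    rw [map_sub, map_sub] at this
    linarith
  rw [Real.dist_eq, hdiff]
  obtain ⟨h0, h1⟩ := hbound M hM
  obtain ⟨h0', h1'⟩ := hbound M' hM'
  rw [← h 1 one_mem_finiteRangeSubmodule] at h1'
  have : ε / (M 1 + 1) * M 1 ≤ ε := by
    rw [div_mul_eq_mul_div, div_le_iff₀ (by positivity)]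
    nlinarith
  exact abs_sub_le_iff.mpr ⟨by linarith, by linarith⟩

end lp

namespace MeasureTheory.AddContent

variable {X : Type*} (m : AddContent ℝ (univ : Set (Set X)))

def simpleIntegralPMap : ℓ^∞(X, ℝ) →ₗ.[ℝ] ℝ where
  domain := lp.finiteRangeSubmodule X
  toFun :=
    { toFun f := m.simpleIntegral f
      map_add' f g := by
        rw [Submodule.coe_add, lp.coeFn_add]
        exact simpleIntegral_add f.2 g.2
      map_smul' c f := by
        rw [Submodule.coe_smul, lp.coeFn_smul]
        exact simpleIntegral_smul c f.2 }

variable {m}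

theorem exists_nonneg_extension (hm : ∀ s, 0 ≤ m s) :
    ∃ M : ℓ^∞(X, ℝ) →ₗ[ℝ] ℝ, (∀ f ∈ lp.finiteRangeSubmodule X, M f = m.simpleIntegral f) ∧
      ∀ f ∈ lp.nonnegCone X, 0 ≤ M f := by
  have hdom (f : ℓ^∞(X, ℝ)) :
      ∃ d : m.simpleIntegralPMap.domain, (d : ℓ^∞(X, ℝ)) + f ∈ lp.nonnegCone X := by
    refine ⟨⟨‖f‖ • 1, Submodule.smul_mem _ _ lp.one_mem_finiteRangeSubmodule⟩,
      lp.mem_nonnegCone.mpr fun x => ?_⟩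
    change 0 ≤ ‖f‖ * (1 : ℓ^∞(X, ℝ)) x + f x
    rw [lp.infty_coeFn_one, Pi.one_apply, mul_one]
    linarith [(abs_le.mp (lp.abs_apply_le_norm f x)).1]
  obtain ⟨M, hMJ, hM⟩ := riesz_extension (lp.nonnegCone X) m.simpleIntegralPMap
    (fun f hf => simpleIntegral_nonneg hm (lp.mem_nonnegCone.mp hf)) hdom
  exact ⟨M, fun f hf => hMJ ⟨f, hf⟩, hM⟩

end MeasureTheory.AddContent

structure IsLeftInvariantMean (M : ℓ^∞(G, ℝ) →ₗ[ℝ] ℝ) : Prop where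
  map_nonneg : ∀ f ∈ lp.nonnegCone G, 0 ≤ M f
  map_one : M 1 = 1
  map_compInfty_mul_left : ∀ g f, M (lp.compInfty (g * ·) f) = M f

theorem AmenableGroup.exists_isLeftInvariantMean (hG : AmenableGroup G) :
    ∃ M : ℓ^∞(G, ℝ) →ₗ[ℝ] ℝ, IsLeftInvariantMean M := by
  obtain ⟨μ, hpos, huniv, hadd, hinv⟩ := hG
  have hempty : μ ∅ = 0 := by simpa using hadd ∅ ∅ (disjoint_empty ∅)
  let m : AddContent ℝ (univ : Set (Set G)) :=
    IsSetRing.addContent_of_union μ (by constructor <;> simp)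
      hempty fun _ _ => hadd _ _
  have hm_inv (g : G) (s : Set G) : m ((g * ·) ⁻¹' s) = m s := by
    change μ _ = μ s
    rw [← inv_inv g, ← image_mul_left, hinv]
  obtain ⟨M, hMJ, hM⟩ := m.exists_nonneg_extension hpos
  refine ⟨M, hM, ?_, fun g f => LinearMap.congr_fun (?_ : M ∘ₗ lp.compInfty (g * ·) = M) f⟩
  · rw [hMJ 1 lp.one_mem_finiteRangeSubmodule, lp.infty_coeFn_one, Pi.one_def,
      AddContent.simpleIntegral_const, one_mul]
    exact huniv
  refine lp.eq_of_nonneg_of_eqOn_finiteRange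
    (fun f hf => hM _ (lp.compInfty_mem_nonnegCone _ hf)) hM fun f hf => ?_
  rw [LinearMap.comp_apply, hMJ _ (lp.compInfty_mem_finiteRangeSubmodule _ hf), hMJ f hf]
  exact AddContent.simpleIntegral_comp_of_preimage (hm_inv g) f

theorem AmenableGroup.of_almostInvariant
    (h : ∀ (K : Finset G) (ε : ℝ), 0 < ε → ∃ ν : Set G → ℝ, (∀ s, ν s ∈ Icc (0 : ℝ) 1) ∧
      (∀ s t, Disjoint s t → ν (s ∪ t) = ν s + ν t) ∧ |ν univ - 1| ≤ ε ∧
      ∀ g ∈ K, ∀ s, |ν ((g * ·) '' s) - ν s| ≤ ε) :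
    AmenableGroup G := by
  classical
  choose ν hν01 hνadd hνuniv hνinv using
    fun i : Finset G × ℕ => h i.1 (1 / (i.2 + 1)) (by positivity)
  let U := Ultrafilter.of (atTop : Filter (Finset G × ℕ))
  have hlim (s : Set G) : ∃ x ∈ Icc (0 : ℝ) 1, Tendsto (ν · s) U (𝓝 x) :=
    isCompact_Icc.ultrafilter_le_nhds (U.map (ν · s))
      (le_principal_iff.mpr (mem_map.mpr (univ_mem' fun i => hν01 i s)))
  choose μ hμ01 hμ using hlim
  have hsmall {f : Finset G × ℕ → ℝ} (hf : ∀ᶠ i in atTop, |f i| ≤ 1 / (i.2 + 1)) :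
      Tendsto f U (𝓝 0) := by
    have hsnd : Tendsto (fun i : Finset G × ℕ => i.2) atTop atTop :=
      tendsto_atTop_atTop_of_monotone (fun _ _ h => h.2) fun n => ⟨(∅, n), le_rfl⟩
    exact (squeeze_zero_norm' hf (tendsto_one_div_add_atTop_nhds_zero_nat.comp hsnd)).mono_left
      (Ultrafilter.of_le _)
  refine ⟨μ, fun s => (hμ01 s).1, ?_, fun s t hst => ?_, fun g s => ?_⟩
  · have := (hsmall (f := (ν · univ - 1)) (.of_forall hνuniv)).add_const 1
    simp only [sub_add_cancel, zero_add] at this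
    exact tendsto_nhds_unique (hμ univ) this
  · have hst' := hμ (s ∪ t)
    simp only [hνadd _ s t hst] at hst'
    exact tendsto_nhds_unique hst' ((hμ s).add (hμ t))
  · have := hsmall (f := fun i => ν i ((g * ·) '' s) - ν i s) <|
      (eventually_ge_atTop ({g}, 0)).mono fun i hi =>
        hνinv i g (hi.1 (Finset.mem_singleton_self g)) s
    exact sub_eq_zero.mp (tendsto_nhds_unique ((hμ _).sub (hμ s)) this)

lemma abs_sum_norm_sq_sub_sum_norm_sq_le {ι E : Type*} [SeminormedAddCommGroup E]
    (s : Finset ι) (u v : ι → E) :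
    |∑ i ∈ s, ‖u i‖ ^ 2 - ∑ i ∈ s, ‖v i‖ ^ 2| ≤
      √(∑ i ∈ s, ‖u i - v i‖ ^ 2) * (√(∑ i ∈ s, ‖u i‖ ^ 2) + √(∑ i ∈ s, ‖v i‖ ^ 2)) := by
  calc |∑ i ∈ s, ‖u i‖ ^ 2 - ∑ i ∈ s, ‖v i‖ ^ 2|
      = |∑ i ∈ s, (‖u i‖ - ‖v i‖) * (‖u i‖ + ‖v i‖)| := by
        rw [← Finset.sum_sub_distrib]
        congr 1
        exact Finset.sum_congr rfl fun i _ => by ring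
    _ ≤ ∑ i ∈ s, ‖u i - v i‖ * ‖u i‖ + ∑ i ∈ s, ‖u i - v i‖ * ‖v i‖ := by
        rw [← Finset.sum_add_distrib]
        refine (Finset.abs_sum_le_sum_abs _ _).trans (Finset.sum_le_sum fun i _ => ?_)
        rw [abs_mul, abs_of_nonneg (by positivity : 0 ≤ ‖u i‖ + ‖v i‖), ← mul_add]
        gcongr
        exact abs_norm_sub_norm_le _ _
    _ ≤ _ := by
        rw [mul_add]
        gcongr <;> exact Real.sum_mul_le_sqrt_mul_sqrt _ _ _

open scoped ComplexOrder

section TracialState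

attribute [local instance] CStarAlgebra.spectralOrder CStarAlgebra.spectralOrderedRing

variable {τ : A →ₗ[ℂ] ℂ}

lemma IsTracialState.of_nonneg (h1 : τ 1 = 1) (hpos : ∀ a, 0 ≤ τ (star a * a))
    (hcomm : ∀ a b, τ (a * b) = τ (b * a)) : IsTracialState τ :=
  ⟨h1, fun a => ⟨(Complex.nonneg_iff.mp (hpos a)).1, (Complex.nonneg_iff.mp (hpos a)).2.symm⟩,
    hcomm⟩

namespace IsTracialState

lemma map_one (hτ : IsTracialState τ) : τ 1 = 1 := hτ.1

lemma re_apply_star_mul_self_nonneg (hτ : IsTracialState τ) (a : A) :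
    0 ≤ (τ (star a * a)).re :=
  (hτ.2.1 a).1

lemma im_apply_star_mul_self (hτ : IsTracialState τ) (a : A) : (τ (star a * a)).im = 0 :=
  (hτ.2.1 a).2

lemma apply_star_mul_self_nonneg (hτ : IsTracialState τ) (a : A) : 0 ≤ τ (star a * a) :=
  Complex.nonneg_iff.mpr ⟨hτ.re_apply_star_mul_self_nonneg a, (hτ.im_apply_star_mul_self a).symm⟩

lemma map_mul_comm (hτ : IsTracialState τ) (a b : A) : τ (a * b) = τ (b * a) := hτ.2.2 a b

def toPositiveLinearMap (hτ : IsTracialState τ) : A →ₚ[ℂ] ℂ :=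
  .mk₀ τ fun x hx => by
    obtain ⟨b, rfl⟩ := CStarAlgebra.nonneg_iff_eq_star_mul_self.mp hx
    exact hτ.apply_star_mul_self_nonneg b

@[simp]
lemma toPositiveLinearMap_apply (hτ : IsTracialState τ) (a : A) :
    hτ.toPositiveLinearMap a = τ a := rfl

lemma re_apply_star_mul_self (hτ : IsTracialState τ) (a : A) :
    (τ (star a * a)).re = ‖hτ.toPositiveLinearMap.toPreGNS a‖ ^ 2 := by
  rw [PositiveLinearMap.preGNS_norm_def, PositiveLinearMap.ofPreGNS_toPreGNS,
    toPositiveLinearMap_apply, Real.sq_sqrt (hτ.re_apply_star_mul_self_nonneg a)]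

/-- Cauchy–Schwarz in the GNS space of `τ`, against the unit. -/
lemma norm_apply_le_sqrt (hτ : IsTracialState τ) (a : A) : ‖τ a‖ ≤ √(τ (star a * a)).re := by
  have h := norm_inner_le_norm (𝕜 := ℂ) (hτ.toPositiveLinearMap.toPreGNS 1)
    (hτ.toPositiveLinearMap.toPreGNS a)
  simpa [PositiveLinearMap.preGNS_inner_def, PositiveLinearMap.preGNS_norm_def, hτ.map_one]
    using h

lemma norm_apply_le (hτ : IsTracialState τ) (a : A) : ‖τ a‖ ≤ ‖a‖ := by
  have h := hτ.toPositiveLinearMap.norm_apply_le_of_nonneg _ (star_mul_self_nonneg a)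
  simp only [toPositiveLinearMap_apply, hτ.map_one, norm_one, one_mul,
    CStarRing.norm_star_mul_self] at h
  calc ‖τ a‖ ≤ √(τ (star a * a)).re := hτ.norm_apply_le_sqrt a
    _ ≤ √(‖a‖ ^ 2) := Real.sqrt_le_sqrt <| (Complex.re_le_norm _).trans (by rwa [sq])
    _ = ‖a‖ := Real.sqrt_sq (norm_nonneg a)

lemma comp_algEquiv (hτ : IsTracialState τ) {σ : A ≃ₐ[ℂ] A}
    (hσ : ∀ a, σ (star a) = star (σ a)) : IsTracialState (τ ∘ₗ σ.toLinearMap) :=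
  .of_nonneg (by simp [hτ.map_one])
    (fun a => by simpa [hσ] using hτ.apply_star_mul_self_nonneg (σ a))
    fun a b => by simpa using hτ.map_mul_comm (σ a) (σ b)

lemma sqrt_re_le_iSup (hτ : IsTracialState τ) (x : A) :
    √(τ x).re ≤ ⨆ σ : {σ : A →ₗ[ℂ] ℂ // IsTracialState σ}, √(σ.1 x).re := by
  refine le_ciSup (f := fun σ : {σ // IsTracialState σ} => √(σ.1 x).re) ⟨√‖x‖, ?_⟩ ⟨τ, hτ⟩
  rintro _ ⟨σ, rfl⟩
  exact Real.sqrt_le_sqrt ((Complex.re_le_norm _).trans (σ.2.norm_apply_le x))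

lemma sqrt_le_u2 (hτ : IsTracialState τ) (a : A) : √(τ (star a * a)).re ≤ u2 a :=
  hτ.sqrt_re_le_iSup _

lemma sqrt_le_u2l {ι : Type*} (hτ : IsTracialState τ) (ξ : ι →₀ A) :
    √(τ (ip ξ ξ)).re ≤ u2l ξ :=
  hτ.sqrt_re_le_iSup _

end IsTracialState

lemma isTracialState_extendRCLike {ψ : Module.Dual ℝ A} (h1 : ψ 1 = 1)
    (hpos : ∀ a, 0 ≤ ψ (star a * a)) (hIpos : ∀ a, ψ (Complex.I • (star a * a)) = 0)
    (hcomm : ∀ a b, ψ (a * b) = ψ (b * a)) : IsTracialState (ψ.extendRCLike (𝕜 := ℂ)) := by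
  have hre (x : A) : (ψ.extendRCLike (𝕜 := ℂ) x).re = ψ x := by
    rw [← RCLike.re_to_complex]
    exact Module.Dual.re_extendRCLike_apply ψ x
  have him (x : A) : (ψ.extendRCLike (𝕜 := ℂ) x).im = -ψ (Complex.I • x) := by
    rw [← RCLike.im_to_complex, ← RCLike.I_to_complex]
    exact Module.Dual.im_extendRCLike_apply ψ x
  refine .of_nonneg (Complex.ext ?_ ?_) (fun a => Complex.nonneg_iff.mpr ⟨?_, ?_⟩) fun a b => ?_
  · simpa [hre] using h1
  · simpa [him, neg_eq_zero] using hIpos 1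
  · simpa [hre] using hpos a
  · simp [him, hIpos]
  · have hI : ψ (Complex.I • (a * b)) = ψ (Complex.I • (b * a)) := by
      rw [← smul_mul_assoc, hcomm, mul_smul_comm]
    exact Complex.ext (by simp [hre, hcomm a b]) (by simp [him, hI])

variable {ι : Type*}

/-- `‖1_s ξ‖²` in `ℓ²(ι, L²(A, τ))`. -/
def traceMass (τ : A →ₗ[ℂ] ℂ) (ξ : ι →₀ A) (s : Set ι) : ℝ :=
  ∑ᶠ i ∈ s, (τ (star (ξ i) * ξ i)).re

lemma support_re_apply_star_mul_self_subset (ξ : ι →₀ A) :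
    (Function.support fun i => (τ (star (ξ i) * ξ i)).re) ⊆ ξ.support := fun i hi => by
  contrapose! hi
  simp [Finsupp.notMem_support_iff.mp hi]

lemma traceMass_eq_sum {ξ : ι →₀ A} {F : Finset ι} (hF : ξ.support ⊆ F) (s : Set ι)
    [DecidablePred (· ∈ s)] :
    traceMass τ ξ s = ∑ i ∈ F with i ∈ s, (τ (star (ξ i) * ξ i)).re := by
  rw [traceMass, finsum_mem_def, finsum_eq_sum_of_support_subset _
    (support_indicator.trans_subset (inter_subset_right.trans
      ((support_re_apply_star_mul_self_subset ξ).trans (Finset.coe_subset.mpr hF)))),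
    Finset.sum_filter]
  exact Finset.sum_congr rfl fun i _ => indicator_apply _ _ _

lemma traceMass_union (ξ : ι →₀ A) {s t : Set ι} (hst : Disjoint s t) :
    traceMass τ ξ (s ∪ t) = traceMass τ ξ s + traceMass τ ξ t := by
  have hfin (u : Set ι) : (u ∩ Function.support fun i => (τ (star (ξ i) * ξ i)).re).Finite :=
    ξ.support.finite_toSet.subset
      (inter_subset_right.trans (support_re_apply_star_mul_self_subset ξ))
  exact finsum_mem_union' hst (hfin s) (hfin t)

lemma traceMass_univ (ξ : ι →₀ A) : traceMass τ ξ univ = (τ (ip ξ ξ)).re := by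
  classical
  rw [traceMass_eq_sum subset_rfl, Finset.filter_true_of_mem fun _ _ => mem_univ _, ip,
    Finsupp.sum, map_sum, Complex.re_sum]

namespace IsTracialState

lemma traceMass_nonneg (hτ : IsTracialState τ) (ξ : ι →₀ A) (s : Set ι) :
    0 ≤ traceMass τ ξ s :=
  finsum_nonneg fun i => finsum_nonneg fun _ => hτ.re_apply_star_mul_self_nonneg (ξ i)

lemma traceMass_le_univ (hτ : IsTracialState τ) (ξ : ι →₀ A) (s : Set ι) :
    traceMass τ ξ s ≤ traceMass τ ξ univ := by
  rw [← union_compl_self s, traceMass_union ξ disjoint_compl_right]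
  linarith [hτ.traceMass_nonneg ξ sᶜ]

lemma traceMass_univ_le_norm (hτ : IsTracialState τ) (ξ : ι →₀ A) :
    traceMass τ ξ univ ≤ ‖ip ξ ξ‖ :=
  (traceMass_univ ξ).trans_le ((Complex.re_le_norm _).trans (hτ.norm_apply_le _))

lemma abs_traceMass_univ_sub_one_le (hτ : IsTracialState τ) (ξ : ι →₀ A) :
    |traceMass τ ξ univ - 1| ≤ u2 (ip ξ ξ - 1) :=
  calc |traceMass τ ξ univ - 1| = |(τ (ip ξ ξ - 1)).re| := by
        rw [map_sub, hτ.map_one, Complex.sub_re, Complex.one_re, traceMass_univ]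
    _ ≤ ‖τ (ip ξ ξ - 1)‖ := Complex.abs_re_le_norm _
    _ ≤ √(τ (star (ip ξ ξ - 1) * (ip ξ ξ - 1))).re := hτ.norm_apply_le_sqrt _
    _ ≤ u2 (ip ξ ξ - 1) := hτ.sqrt_le_u2 _

lemma abs_traceMass_sub_le (hτ : IsTracialState τ) (ξ η : ι →₀ A) (s : Set ι) :
    |traceMass τ η s - traceMass τ ξ s| ≤
      √(traceMass τ (η - ξ) s) * (√(traceMass τ η s) + √(traceMass τ ξ s)) := by
  classical
  set F := η.support ∪ ξ.support
  have hη : η.support ⊆ F := Finset.subset_union_left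
  have hξ : ξ.support ⊆ F := Finset.subset_union_right
  rw [traceMass_eq_sum hη, traceMass_eq_sum hξ, traceMass_eq_sum Finsupp.support_sub]
  simp only [hτ.re_apply_star_mul_self, Finsupp.sub_apply, map_sub]
  exact abs_sum_norm_sq_sub_sum_norm_sq_le _ _ _

end IsTracialState

end TracialState

section Averaging

variable (α : G →* (A ≃ₐ[ℂ] A)) {τ : A →ₗ[ℂ] ℂ}

def IsTracialState.orbitRe (hstar : ∀ (g : G) (a : A), α g (star a) = star (α g a))
    (hτ : IsTracialState τ) : A →ₗ[ℝ] ℓ^∞(G, ℝ) where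
  toFun a := ⟨fun g => (τ (α g⁻¹ a)).re, memℓp_infty ⟨‖a‖, by
    rintro _ ⟨g, rfl⟩
    exact (Complex.abs_re_le_norm _).trans ((hτ.comp_algEquiv (hstar g⁻¹)).norm_apply_le a)⟩⟩
  map_add' a b := lp.ext <| funext fun g => by
    simp only [map_add, Complex.add_re, lp.coeFn_add, Pi.add_apply]
  map_smul' c a := lp.ext <| funext fun g => by
    simp only [← Complex.coe_smul, map_smul, smul_eq_mul, Complex.re_ofReal_mul, lp.coeFn_smul,
      Pi.smul_apply, RingHom.id_apply]

@[simp]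
lemma IsTracialState.orbitRe_apply (hstar : ∀ (g : G) (a : A), α g (star a) = star (α g a))
    (hτ : IsTracialState τ) (a : A) (g : G) :
    hτ.orbitRe α hstar a g = (τ (α g⁻¹ a)).re := rfl

theorem IsLeftInvariantMean.exists_invariant_isTracialState {M : ℓ^∞(G, ℝ) →ₗ[ℝ] ℝ}
    (hM : IsLeftInvariantMean M) (hstar : ∀ (g : G) (a : A), α g (star a) = star (α g a))
    (hτ : IsTracialState τ) :
    ∃ τ' : A →ₗ[ℂ] ℂ, IsTracialState τ' ∧ ∀ (g : G) (a : A), τ' (α g a) = τ' a := by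
  set Φ := hτ.orbitRe α hstar
  set ψ := M ∘ₗ Φ
  have hΦ_one : Φ 1 = 1 := lp.ext <| funext fun g => by
    simp [Φ, hτ.map_one, lp.infty_coeFn_one]
  have hΦ_comm (a b : A) : Φ (a * b) = Φ (b * a) := lp.ext <| funext fun g => by
    simp [Φ, hτ.map_mul_comm]
  have hΦ_I (a : A) : Φ (Complex.I • (star a * a)) = 0 := lp.ext <| funext fun g => by
    simp only [Φ, IsTracialState.orbitRe_apply, map_smul, map_mul, hstar, smul_eq_mul,
      Complex.mul_re, Complex.I_re, Complex.I_im, zero_mul, one_mul, zero_sub,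
      hτ.im_apply_star_mul_self, neg_zero, lp.coeFn_zero, Pi.zero_apply]
  have hΦ_inv (h : G) (a : A) : Φ (α h a) = lp.compInfty (h⁻¹ * ·) (Φ a) :=
    lp.ext <| funext fun g => by simp [Φ]
  have hψ_inv (h : G) (a : A) : ψ (α h a) = ψ a := by
    simp [ψ, hΦ_inv, hM.map_compInfty_mul_left]
  refine ⟨Module.Dual.extendRCLike ψ, isTracialState_extendRCLike ?_ (fun a => ?_)
    (fun a => ?_) (fun a b => ?_), fun h a => ?_⟩
  · simp [ψ, hΦ_one, hM.map_one]
  · refine hM.map_nonneg _ (lp.mem_nonnegCone.mpr fun g => ?_)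
    simpa only [Φ, IsTracialState.orbitRe_apply, map_mul, hstar] using
      hτ.re_apply_star_mul_self_nonneg (α g⁻¹ a)
  · simp [ψ, hΦ_I]
  · simp [ψ, hΦ_comm]
  · rw [Module.Dual.extendRCLike_apply, Module.Dual.extendRCLike_apply, ← map_smul (α h),
      hψ_inv, hψ_inv]

end Averaging

section TraciallyAmenable

variable {α : G →* (A ≃ₐ[ℂ] A)} {τ : A →ₗ[ℂ] ℂ}

lemma diagAct_apply_mul (α : G →* (A ≃ₐ[ℂ] A)) (g h : G) (ξ : G →₀ A) :
    diagAct α g ξ (g * h) = α g (ξ h) := by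
  rw [diagAct, Finsupp.mapRange_apply, Finsupp.mapDomain_apply (mul_right_injective g)]

lemma traceMass_diagAct (hstar : ∀ (g : G) (a : A), α g (star a) = star (α g a))
    (hinv : ∀ (g : G) (a : A), τ (α g a) = τ a) (g : G) (ξ : G →₀ A) (s : Set G) :
    traceMass τ (diagAct α g ξ) ((g * ·) '' s) = traceMass τ ξ s := by
  rw [traceMass, finsum_mem_image (mul_right_injective g).injOn]
  refine finsum_mem_congr rfl fun h _ => ?_
  rw [diagAct_apply_mul, ← hstar, ← map_mul, hinv]

namespace IsTracialState

lemma abs_traceMass_image_sub_le (hτ : IsTracialState τ)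
    (hstar : ∀ (g : G) (a : A), α g (star a) = star (α g a))
    (hinv : ∀ (g : G) (a : A), τ (α g a) = τ a) {ξ : G →₀ A} (hξ : ‖ip ξ ξ‖ ≤ 1) (g : G)
    (s : Set G) :
    |traceMass τ ξ ((g * ·) '' s) - traceMass τ ξ s| ≤ 2 * u2l (diagAct α g ξ - ξ) := by
  set η := diagAct α g ξ
  set S := (g * ·) '' s
  have hξ1 : √(traceMass τ ξ S) ≤ 1 := Real.sqrt_le_one.mpr <|
    (hτ.traceMass_le_univ ξ S).trans ((hτ.traceMass_univ_le_norm ξ).trans hξ)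
  have hη1 : √(traceMass τ η S) ≤ 1 := by
    have := traceMass_diagAct hstar hinv g ξ univ
    rw [image_univ_of_surjective (mul_left_surjective g)] at this
    exact Real.sqrt_le_one.mpr ((hτ.traceMass_le_univ η S).trans
      (this ▸ (hτ.traceMass_univ_le_norm ξ).trans hξ))
  have hd : √(traceMass τ (η - ξ) S) ≤ u2l (η - ξ) :=
    (Real.sqrt_le_sqrt ((hτ.traceMass_le_univ _ S).trans_eq (traceMass_univ _))).trans
      (hτ.sqrt_le_u2l _)
  rw [← traceMass_diagAct hstar hinv g ξ s, abs_sub_comm]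
  calc _ ≤ √(traceMass τ (η - ξ) S) * (√(traceMass τ η S) + √(traceMass τ ξ S)) :=
        hτ.abs_traceMass_sub_le ξ η S
    _ ≤ u2l (η - ξ) * (1 + 1) := by gcongr; exact (Real.sqrt_nonneg _).trans hd
    _ = 2 * u2l (η - ξ) := by ring

end IsTracialState

theorem IsTraciallyAmenable.amenableGroup (hTA : IsTraciallyAmenable α)
    (hstar : ∀ (g : G) (a : A), α g (star a) = star (α g a)) (hτ : IsTracialState τ)
    (hinv : ∀ (g : G) (a : A), τ (α g a) = τ a) : AmenableGroup G := by
  refine AmenableGroup.of_almostInvariant fun K ε hε => ?_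
  obtain ⟨ξ, hξ, -, hunit, hK⟩ := hTA ∅ K (ε / 2) (by positivity)
  have hξ1 : ‖ip ξ ξ‖ ≤ 1 := Real.sqrt_le_one.mp hξ
  refine ⟨traceMass τ ξ, fun s => ⟨hτ.traceMass_nonneg ξ s, ?_⟩, fun s t => traceMass_union ξ,
    ?_, fun g hg s => ?_⟩
  · exact ((hτ.traceMass_le_univ ξ s).trans (hτ.traceMass_univ_le_norm ξ)).trans hξ1
  · exact (hτ.abs_traceMass_univ_sub_one_le ξ).trans (by linarith)
  · exact (hτ.abs_traceMass_image_sub_le hstar hinv hξ1 g s).trans (by linarith [hK g hg])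

end TraciallyAmenable

/-- Lemma 3.9: for a tracially amenable action `α` of a discrete group
`G` on a unital C*-algebra `A` with `T(A) ≠ ∅`, the group `G` is amenable if and only
if `A` admits a `G`-invariant tracial state. -/
theorem amenable_iff_invariant_trace (α : G →* (A ≃ₐ[ℂ] A))
    (hstar : ∀ (g : G) (a : A), α g (star a) = star (α g a))
    (hT : ∃ τ : A →ₗ[ℂ] ℂ, IsTracialState τ)
    (hTA : IsTraciallyAmenable α) :
    AmenableGroup G ↔
      ∃ τ : A →ₗ[ℂ] ℂ, IsTracialState τ ∧ ∀ (g : G) (a : A), τ (α g a) = τ a := by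
  refine ⟨fun hG => ?_, fun ⟨τ, hτ, hinv⟩ => hTA.amenableGroup hstar hτ hinv⟩
  obtain ⟨M, hM⟩ := hG.exists_isLeftInvariantMean
  obtain ⟨τ₀, hτ₀⟩ := hT
  exact hM.exists_invariant_isTracialState α hstar hτ₀
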